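/- Operator inequality controlling the no-Hamiltonian scheme operator: let Q be a positive semidefinite Hermitian d×d complex matrix and Δt ≥ 0; set S = I + (Δt²/4)Q² and let S^{−1/2} be the inverse of its positive definite square root. Then, in the Loewner order, 0 ≤ exp(−(Δt/2)Q) − (I − (Δt/2)Q)·S^{−1/2} ≤ (Δt²/4)·Q². -/

import Mathlib

/-!
Everything in sight is a function of the single Hermitian matrix `A = (Δt/2) Q`: the
exponential, `1 - A` and `S^{-1/2} = (1 + A²)^{-1/2}` all lie in the continuous functional
calculus of `A`, which is a homomorphism. Hence the middle matrix is `f(A)` for the scalar function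
`f(t) = e^{-t} - (1 - t)/√(1 + t²)`, and the two Loewner inequalities reduce to `0 ≤ f(t) ≤ t²`
on the spectrum of `A`, which lies in `[0, ∞)`. For the upper bound, `e^{-t} ≤ 1 - t + t²/2`
and `(1 - t)/√(1 + t²) ≥ 1 - t - t²/2` when `t ≥ 0`.
-/

open Matrix
open scoped ComplexOrder

/-- The positive semidefinite square root of a matrix (defined to be `0` if the matrix is not
positive semidefinite). -/
noncomputable def matSqrt {d : ℕ} (A : Matrix (Fin d) (Fin d) ℂ) : Matrix (Fin d) (Fin d) ℂ :=
  open scoped Classical in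
  open scoped MatrixOrder in
  if h : A.PosSemidef then CFC.sqrt A else 0

namespace Real

lemma exp_neg_le_one_sub_add_sq_div_two {t : ℝ} (ht : 0 ≤ t) : exp (-t) ≤ 1 - t + t ^ 2 / 2 := by
  rw [exp_neg, inv_le_iff_one_le_mul₀' (exp_pos t)]
  calc (1 : ℝ) ≤ (1 + t + t ^ 2 / 2) * (1 - t + t ^ 2 / 2) := by nlinarith [pow_nonneg ht 4]
    _ ≤ exp t * (1 - t + t ^ 2 / 2) := by
      gcongr
      · nlinarith [sq_nonneg (t - 1)]
      · exact quadratic_le_exp_of_nonneg ht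

lemma inv_sqrt_one_add_sq_le_one (t : ℝ) : (√(1 + t ^ 2))⁻¹ ≤ 1 :=
  inv_le_one_of_one_le₀ (one_le_sqrt.mpr (by nlinarith [sq_nonneg t]))

lemma one_sub_sq_div_two_le_inv_sqrt_one_add_sq (t : ℝ) : 1 - t ^ 2 / 2 ≤ (√(1 + t ^ 2))⁻¹ := by
  have hsqrt : √(1 + t ^ 2) ≤ 1 + t ^ 2 / 2 :=
    sqrt_le_iff.mpr ⟨by positivity, by nlinarith [sq_nonneg (t ^ 2)]⟩
  calc 1 - t ^ 2 / 2 ≤ (1 + t ^ 2 / 2)⁻¹ := by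
        rw [← one_div, le_div_iff₀ (by positivity)]
        nlinarith [sq_nonneg (t ^ 2)]
    _ ≤ (√(1 + t ^ 2))⁻¹ := inv_anti₀ (sqrt_pos.mpr (by positivity)) hsqrt

lemma one_sub_mul_inv_sqrt_one_add_sq_le_exp_neg (t : ℝ) :
    (1 - t) * (√(1 + t ^ 2))⁻¹ ≤ exp (-t) := by
  rcases le_total t 1 with h | h
  · calc (1 - t) * (√(1 + t ^ 2))⁻¹ ≤ 1 - t :=
          mul_le_of_le_one_right (by linarith) (inv_sqrt_one_add_sq_le_one t)
      _ ≤ exp (-t) := one_sub_le_exp_neg t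
  · exact (mul_nonpos_of_nonpos_of_nonneg (by linarith) (by positivity)).trans (exp_pos _).le

lemma one_sub_sub_sq_div_two_le_mul_inv_sqrt_one_add_sq {t : ℝ} (ht : 0 ≤ t) :
    1 - t - t ^ 2 / 2 ≤ (1 - t) * (√(1 + t ^ 2))⁻¹ := by
  have hinv := inv_sqrt_one_add_sq_le_one t
  rcases le_total t 1 with h | h
  · calc 1 - t - t ^ 2 / 2 ≤ (1 - t) * (1 - t ^ 2 / 2) := by nlinarith [pow_nonneg ht 3]
      _ ≤ (1 - t) * (√(1 + t ^ 2))⁻¹ :=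
        mul_le_mul_of_nonneg_left (one_sub_sq_div_two_le_inv_sqrt_one_add_sq t) (by linarith)
  · nlinarith

end Real

/-- The gap between the exact factor `e^{-t}` and the factor `(1 - t)/√(1 + t²)` of the scheme,
at `t = (Δt/2) λ` for an eigenvalue `λ` of `Q`. -/
noncomputable def schemeDefect (t : ℝ) : ℝ := Real.exp (-t) - (1 - t) * (√(1 + t ^ 2))⁻¹

lemma schemeDefect_nonneg (t : ℝ) : 0 ≤ schemeDefect t :=
  sub_nonneg.mpr (Real.one_sub_mul_inv_sqrt_one_add_sq_le_exp_neg t)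

lemma schemeDefect_le_sq {t : ℝ} (ht : 0 ≤ t) : schemeDefect t ≤ t ^ 2 := by
  have hexp := Real.exp_neg_le_one_sub_add_sq_div_two ht
  have hscheme := Real.one_sub_sub_sq_div_two_le_mul_inv_sqrt_one_add_sq ht
  unfold schemeDefect
  linarith

namespace Matrix

section RCLike

variable {n 𝕜 : Type*} [Fintype n] [DecidableEq n] [RCLike 𝕜] {A : Matrix n n 𝕜}

open scoped MatrixOrder in
lemma posSemidef_cfc {f : ℝ → ℝ} (hf : ∀ x ∈ spectrum ℝ A, 0 ≤ f x) : (cfc f A).PosSemidef :=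
  nonneg_iff_posSemidef.mp (cfc_nonneg hf)

open scoped MatrixOrder in
lemma PosSemidef.nonneg_of_mem_spectrum (hA : A.PosSemidef) {x : ℝ} (hx : x ∈ spectrum ℝ A) :
    0 ≤ x :=
  spectrum_nonneg_of_nonneg (nonneg_iff_posSemidef.mpr hA) hx

namespace IsHermitian

variable (hA : A.IsHermitian)
include hA

lemma one_sub_eq_cfc : 1 - A = cfc (fun x : ℝ => 1 - x) A := by
  have hA' : IsSelfAdjoint A := hA
  rw [cfc_sub (fun _ : ℝ => 1) (fun x : ℝ => x) A, cfc_id' ℝ A, cfc_const_one ℝ A]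

lemma one_add_sq_eq_cfc : 1 + A ^ 2 = cfc (fun x : ℝ => 1 + x ^ 2) A := by
  have hA' : IsSelfAdjoint A := hA
  rw [cfc_const_add (1 : ℝ) (fun x : ℝ => x ^ 2) A, cfc_pow_id A 2, map_one]

lemma sq_eq_cfc : A ^ 2 = cfc (fun x : ℝ => x ^ 2) A := (cfc_pow_id A 2 hA).symm

lemma inv_cfc {f : ℝ → ℝ} (hf : ∀ x ∈ spectrum ℝ A, f x ≠ 0) :
    (cfc f A)⁻¹ = cfc (fun x : ℝ => (f x)⁻¹) A :=
  (nonsing_inv_eq_ringInverse _).trans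
    (cfc_inv f A hf (A.finite_real_spectrum.continuousOn f) hA).symm

end IsHermitian

end RCLike

open scoped Matrix.Norms.L2Operator in
lemma IsHermitian.exp_neg_eq_cfc {n : Type*} [Fintype n] [DecidableEq n] {A : Matrix n n ℂ}
    (hA : A.IsHermitian) :
    NormedSpace.exp (-A) = cfc (fun x : ℝ => Real.exp (-x)) A := by
  have hA' : IsSelfAdjoint A := hA
  rw [cfc_comp_neg Real.exp A, CFC.real_exp_eq_normedSpace_exp]

section matSqrt

variable {d : ℕ} {A : Matrix (Fin d) (Fin d) ℂ}

open scoped MatrixOrder in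
lemma IsHermitian.matSqrt_cfc (hA : A.IsHermitian) {f : ℝ → ℝ}
    (hf : ∀ x ∈ spectrum ℝ A, 0 ≤ f x) :
    matSqrt (cfc f A) = cfc (fun x : ℝ => √(f x)) A := by
  rw [matSqrt, dif_pos (posSemidef_cfc hf), CFC.sqrt_eq_real_sqrt _ (cfc_nonneg hf), cfcₙ_eq_cfc]
  exact (cfc_comp' Real.sqrt f A (hf := A.finite_real_spectrum.continuousOn f) (ha := hA)).symm

lemma IsHermitian.exp_neg_sub_mul_inv_matSqrt_eq_cfc (hA : A.IsHermitian) :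
    NormedSpace.exp (-A) - (1 - A) * (matSqrt (1 + A ^ 2))⁻¹ = cfc schemeDefect A := by
  have hsqrt_ne : ∀ x ∈ spectrum ℝ A, √(1 + x ^ 2) ≠ 0 := fun x _ => by positivity
  rw [hA.exp_neg_eq_cfc, hA.one_sub_eq_cfc, hA.one_add_sq_eq_cfc,
    hA.matSqrt_cfc fun x _ => by positivity, hA.inv_cfc hsqrt_ne,
    ← cfc_mul (fun x : ℝ => 1 - x) _ A (hg := A.finite_real_spectrum.continuousOn _),
    ← cfc_sub (fun x : ℝ => Real.exp (-x)) _ A (hg := A.finite_real_spectrum.continuousOn _)]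
  rfl

lemma PosSemidef.exp_neg_sub_mul_inv_matSqrt_bounds (hA : A.PosSemidef) :
    (NormedSpace.exp (-A) - (1 - A) * (matSqrt (1 + A ^ 2))⁻¹).PosSemidef ∧
      (A ^ 2 - (NormedSpace.exp (-A) - (1 - A) * (matSqrt (1 + A ^ 2))⁻¹)).PosSemidef := by
  rw [hA.isHermitian.exp_neg_sub_mul_inv_matSqrt_eq_cfc, hA.isHermitian.sq_eq_cfc,
    ← cfc_sub (fun x : ℝ => x ^ 2) schemeDefect A (hg := A.finite_real_spectrum.continuousOn _)]
  exact ⟨posSemidef_cfc fun x _ => schemeDefect_nonneg x,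
    posSemidef_cfc fun x hx => sub_nonneg.mpr (schemeDefect_le_sq (hA.nonneg_of_mem_spectrum hx))⟩

end matSqrt

end Matrix

/-- Operator inequality controlling the no-Hamiltonian scheme operator: for `Q` positive
semidefinite, `S = I + (Δt²/4)Q²`, in the Loewner order
`0 ≤ exp(−(Δt/2)Q) − (I − (Δt/2)Q) S^{−1/2} ≤ (Δt²/4) Q²`. -/
theorem stmt12 {d : ℕ} (Q : Matrix (Fin d) (Fin d) ℂ) (hQ : Q.PosSemidef)
    (Δt : ℝ) (hΔt : 0 ≤ Δt) :
    (NormedSpace.exp ((-(Δt / 2 : ℝ) : ℂ) • Q)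
      - (1 - ((Δt / 2 : ℝ) : ℂ) • Q) *
          (matSqrt (1 + ((Δt ^ 2 / 4 : ℝ) : ℂ) • Q ^ 2))⁻¹).PosSemidef
    ∧ (((Δt ^ 2 / 4 : ℝ) : ℂ) • Q ^ 2
        - (NormedSpace.exp ((-(Δt / 2 : ℝ) : ℂ) • Q)
            - (1 - ((Δt / 2 : ℝ) : ℂ) • Q) *
                (matSqrt (1 + ((Δt ^ 2 / 4 : ℝ) : ℂ) • Q ^ 2))⁻¹)).PosSemidef := by
  set A : Matrix (Fin d) (Fin d) ℂ := ((Δt / 2 : ℝ) : ℂ) • Q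
  have hA : A.PosSemidef := hQ.smul (by exact_mod_cast div_nonneg hΔt zero_le_two)
  have hsq : ((Δt ^ 2 / 4 : ℝ) : ℂ) • Q ^ 2 = A ^ 2 := by
    rw [smul_pow]
    congr 1
    push_cast
    ring
  rw [neg_smul, hsq]
  exact hA.exp_neg_sub_mul_inv_matSqrt_bounds
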